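/- arXiv:2411.03662 — 2 statements merged into one kernel-verified Lean document; each statement's English description precedes it below -/
import Mathlib

section
/- Let a_1, …, a_m be positive even integers (m ≥ 1). Then ∏_{j=1}^m (Λ_{a_j} − 1) ≡ (∑_{j=1}^m Λ_{a_j}) − 1 (mod 2) in ℤ[ℂ*]. -/
open scoped Classical

/-- `Λ a ∈ ℤ[ℂˣ]`: the sum of the group-ring basis elements over all `a`-th roots of
unity in `ℂ`, i.e. the divisor of the polynomial `t ^ a - 1`. -/
noncomputable def Lambda (a : ℕ) : MonoidAlgebra ℤ ℂˣ :=
  if h : a = 0 then 0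
  else
    haveI : NeZero a := ⟨h⟩
    haveI : Fintype (rootsOfUnity a ℂ) := Fintype.ofFinite _
    ∑ ζ : rootsOfUnity a ℂ, MonoidAlgebra.single (ζ : ℂˣ) (1 : ℤ)

/-- `x ≡ y (mod 2)` in the group ring `ℤ[ℂˣ]`: `x - y = 2 z` for some `z ∈ ℤ[ℂˣ]`. -/
def Mod2 (x y : MonoidAlgebra ℤ ℂˣ) : Prop :=
  ∃ z : MonoidAlgebra ℤ ℂˣ, x - y = 2 * z

/-!
Reduce modulo the ideal `(2)`. For even `a` and `b`, the product `Λ_a Λ_b = ∑_{ζ ∈ μ_a} ⟨ζ⟩ Λ_b`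
vanishes there: `⟨-1⟩ Λ_b = Λ_b`, so the terms for `ζ` and `-ζ` agree and cancel in pairs.
Once all pairwise products vanish, `∏ (1 + Λ_{a_j}) = 1 + ∑ Λ_{a_j}`, and `-1 = 1` modulo `2`.
-/

theorem Ideal.Quotient.two_eq_zero_of_span_two {R : Type*} [CommRing R] :
    (2 : R ⧸ Ideal.span {(2 : R)}) = 0 :=
  map_ofNat (Ideal.Quotient.mk (Ideal.span {(2 : R)})) 2 ▸ Ideal.Quotient.mk_singleton_self (2 : R)

theorem mod2_iff_mk_eq {x y : MonoidAlgebra ℤ ℂˣ} :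
    Mod2 x y ↔ Ideal.Quotient.mk (Ideal.span {2}) x = Ideal.Quotient.mk (Ideal.span {2}) y :=
  (Ideal.Quotient.eq.trans Ideal.mem_span_singleton).symm

theorem Finset.prod_one_add_of_pairwise_mul_eq_zero {ι R : Type*} [CommSemiring R]
    {s : Finset ι} {f : ι → R} (hf : (s : Set ι).Pairwise fun i j => f i * f j = 0) :
    ∏ i ∈ s, (1 + f i) = 1 + ∑ i ∈ s, f i := by
  induction s using Finset.cons_induction with
  | empty => simp
  | cons j s hj ih =>
    rw [Finset.coe_cons, Set.pairwise_insert] at hf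
    have hjs : f j * ∑ i ∈ s, f i = 0 :=
      Finset.mul_sum s f (f j) ▸ Finset.sum_eq_zero fun i hi =>
        (hf.2 i hi (ne_of_mem_of_not_mem hi hj).symm).1
    calc ∏ i ∈ Finset.cons j s hj, (1 + f i)
        = 1 + (f j + ∑ i ∈ s, f i) + f j * ∑ i ∈ s, f i := by
          rw [Finset.prod_cons, ih hf.1]; ring
      _ = 1 + ∑ i ∈ Finset.cons j s hj, f i := by rw [hjs, add_zero, Finset.sum_cons]

theorem Fintype.sum_eq_zero_of_mul_left_invariant {G R : Type*} [Group G] [Fintype G]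
    [NonAssocSemiring R] (h2 : (2 : R) = 0) {ε : G} (hε : orderOf ε = 2) {f : G → R}
    (hf : ∀ g, f (ε * g) = f g) : ∑ g, f g = 0 := by
  obtain ⟨hε2, hε1⟩ := orderOf_eq_prime_iff.mp hε
  refine Finset.sum_involution (fun g _ => ε * g) (fun g _ => ?_) (fun g _ _ => ?_)
    (fun _ _ => Finset.mem_univ _) (fun g _ => ?_)
  · rw [hf, ← two_mul, h2, zero_mul]
  · exact fun h => hε1 (mul_eq_right.mp h)
  · rw [← mul_assoc, ← sq, hε2, one_mul]

theorem neg_one_mem_rootsOfUnity {R : Type*} [CommRing R] {a : ℕ} (ha : Even a) :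
    (-1 : Rˣ) ∈ rootsOfUnity a R := by
  rw [mem_rootsOfUnity, ha.neg_one_pow]

theorem orderOf_neg_one_rootsOfUnity {a : ℕ} (ha : Even a) :
    orderOf (⟨-1, neg_one_mem_rootsOfUnity ha⟩ : rootsOfUnity a ℂ) = 2 := by
  refine orderOf_eq_prime_iff.mpr ⟨?_, fun h => ?_⟩
  · ext; simp
  · have := congrArg (fun x : rootsOfUnity a ℂ => ((x : ℂˣ) : ℂ)) h
    norm_num at this

theorem Lambda_eq_sum (a : ℕ) [NeZero a] [Fintype (rootsOfUnity a ℂ)] :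
    Lambda a = ∑ ζ : rootsOfUnity a ℂ, MonoidAlgebra.single (ζ : ℂˣ) (1 : ℤ) := by
  rw [Lambda, dif_neg (NeZero.ne a)]
  congr!

theorem single_mul_Lambda {a : ℕ} {ζ : ℂˣ} (hζ : ζ ∈ rootsOfUnity a ℂ) :
    MonoidAlgebra.single ζ 1 * Lambda a = Lambda a := by
  rcases eq_or_ne a 0 with rfl | ha
  · simp [Lambda]
  have : NeZero a := ⟨ha⟩
  have := Fintype.ofFinite (rootsOfUnity a ℂ)
  rw [Lambda_eq_sum, Finset.mul_sum]
  simp_rw [MonoidAlgebra.single_mul_single, one_mul]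
  exact Fintype.sum_equiv (Equiv.mulLeft ⟨ζ, hζ⟩) _ _ fun _ => rfl

theorem two_dvd_Lambda_mul_Lambda {a b : ℕ} (ha : Even a) (hb : Even b) :
    2 ∣ Lambda a * Lambda b := by
  rcases eq_or_ne a 0 with rfl | ha0
  · simp [Lambda]
  have : NeZero a := ⟨ha0⟩
  have := Fintype.ofFinite (rootsOfUnity a ℂ)
  rw [← Ideal.Quotient.eq_zero_iff_dvd, Lambda_eq_sum, Finset.sum_mul, map_sum]
  refine Fintype.sum_eq_zero_of_mul_left_invariant Ideal.Quotient.two_eq_zero_of_span_two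
    (orderOf_neg_one_rootsOfUnity ha) fun ζ => congrArg _ ?_
  conv_rhs => rw [← single_mul_Lambda (neg_one_mem_rootsOfUnity hb)]
  rw [← mul_assoc, MonoidAlgebra.single_mul_single, one_mul, mul_comm (ζ : ℂˣ)]
  rfl

theorem prod_even_mod_two_general (m : ℕ) (a : Fin m → ℕ)
    (ha : ∀ j, 0 < a j ∧ Even (a j)) :
    Mod2 (∏ j, (Lambda (a j) - 1)) ((∑ j, Lambda (a j)) - 1) := by
  let π := Ideal.Quotient.mk (Ideal.span {(2 : MonoidAlgebra ℤ ℂˣ)})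
  have hsub (x : MonoidAlgebra ℤ ℂˣ ⧸ Ideal.span {(2 : MonoidAlgebra ℤ ℂˣ)}) : x - 1 = 1 + x := by
    linear_combination -Ideal.Quotient.two_eq_zero_of_span_two (R := MonoidAlgebra ℤ ℂˣ)
  have hprod (i j : Fin m) : π (Lambda (a i)) * π (Lambda (a j)) = 0 := by
    rw [← map_mul, Ideal.Quotient.eq_zero_iff_dvd]
    exact two_dvd_Lambda_mul_Lambda (ha i).2 (ha j).2
  rw [mod2_iff_mk_eq, map_prod, map_sub, map_sum, map_one]
  simp only [map_sub, map_one, hsub]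
  exact Finset.prod_one_add_of_pairwise_mul_eq_zero (f := fun j => π (Lambda (a j)))
    fun i _ j _ _ => hprod i j

/-- For positive even integers `a_1, …, a_m` with `m ≥ 1`,
`∏_{j=1}^m (Λ_{a_j} - 1) ≡ (∑_{j=1}^m Λ_{a_j}) - 1 (mod 2)` in `ℤ[ℂˣ]`. -/
theorem prod_even_mod_two (m : ℕ) (hm : 1 ≤ m) (a : Fin m → ℕ)
    (ha : ∀ j, 0 < a j ∧ Even (a j)) :
    Mod2 (∏ j, (Lambda (a j) - 1)) ((∑ j, Lambda (a j)) - 1) :=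
  prod_even_mod_two_general m a ha
end

section
/- Let a be a positive even integer and b a positive odd integer. Then Λ_a · (Λ_b − 1) ≡ Λ_{lcm(a, b)} − Λ_a (mod 2) in ℤ[ℂ*]. -/
/-!
Multiplication `μ_a × μ_b → μ_lcm(a,b)` is a surjective homomorphism whose kernel
`{(ζ, ζ⁻¹)}` is a copy of `μ_gcd(a,b)`, so every fibre has `gcd(a,b)` points and
`Λ_a Λ_b = gcd(a,b) Λ_lcm(a,b)`. When `b` is odd, so is `gcd(a,b)`, whence
`Λ_a Λ_b ≡ Λ_lcm(a,b) (mod 2)`.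
-/

open scoped Classical

theorem rootsOfUnity_sup_rootsOfUnity {M : Type*} [CommMonoid M] (m n : ℕ) :
    rootsOfUnity m M ⊔ rootsOfUnity n M = rootsOfUnity (Nat.lcm m n) M := by
  rcases eq_or_ne m 0 with rfl | hm
  · simp
  refine le_antisymm (sup_le (rootsOfUnity_le_of_dvd (Nat.dvd_lcm_left m n))
    (rootsOfUnity_le_of_dvd (Nat.dvd_lcm_right m n))) fun ζ hζ => ?_
  have hg : 0 < Nat.gcd m n := Nat.gcd_pos_of_pos_left n (Nat.pos_of_ne_zero hm)
  obtain ⟨u, v, huv⟩ := Nat.isCoprime_iff_coprime.mpr (Nat.coprime_div_gcd_div_gcd hg)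
  have hζ : ζ ^ Nat.lcm m n = 1 := (mem_rootsOfUnity _ _).mp hζ
  have hm' : ζ ^ (n / Nat.gcd m n) ∈ rootsOfUnity m M := by
    rw [mem_rootsOfUnity, ← pow_mul, mul_comm, ← Nat.mul_div_assoc m (Nat.gcd_dvd_right m n)]
    exact hζ
  have hn' : ζ ^ (m / Nat.gcd m n) ∈ rootsOfUnity n M := by
    rw [mem_rootsOfUnity, ← pow_mul, Nat.div_mul_right_comm (Nat.gcd_dvd_left m n) n]
    exact hζ
  have hsplit : (ζ ^ (n / Nat.gcd m n)) ^ v * (ζ ^ (m / Nat.gcd m n)) ^ u = ζ := by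
    rw [← zpow_natCast, ← zpow_natCast, ← zpow_mul, ← zpow_mul, ← zpow_add, add_comm,
      mul_comm _ u, mul_comm _ v, huv, zpow_one]
  exact hsplit ▸ Subgroup.mul_mem_sup (Subgroup.zpow_mem _ hm' v) (Subgroup.zpow_mem _ hn' u)

namespace MonoidAlgebra

variable {R G : Type*} [Semiring R] [CommGroup G]

theorem sum_single_mul_sum_single_of_sup_eq {H K L : Subgroup G} [Fintype H] [Fintype K]
    [Fintype L] (hL : H ⊔ K = L) :
    (∑ h : H, single (h : G) (1 : R)) * ∑ k : K, single (k : G) 1 =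
      Nat.card ↥(H ⊓ K) • ∑ x : L, single (x : G) 1 := by
  subst hL
  set φ : H × K →* ↥(H ⊔ K) := (H.subtype.coprod K.subtype).codRestrict _
    fun p => Subgroup.mul_mem_sup p.1.2 p.2.2
  have hφ : Function.Surjective φ := by
    rintro ⟨x, hx⟩
    obtain ⟨h, hh, k, hk, rfl⟩ := Subgroup.mem_sup.mp hx
    exact ⟨(⟨h, hh⟩, ⟨k, hk⟩), rfl⟩
  have mem_ker : ∀ p, p ∈ φ.ker ↔ (p.1 : G) * p.2 = 1 := fun _ =>
    MonoidHom.mem_ker.trans Subtype.ext_iff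
  have hker : φ.ker ≃ ↥(H ⊓ K) :=
    { toFun := fun p => ⟨p.1.1, p.1.1.2,
        eq_inv_of_mul_eq_one_left ((mem_ker _).mp p.2) ▸ K.inv_mem p.1.2.2⟩
      invFun := fun z =>
        ⟨(⟨z, z.2.1⟩, ⟨z⁻¹, K.inv_mem z.2.2⟩), (mem_ker _).mpr (mul_inv_cancel _)⟩
      left_inv := fun p => by
        ext
        · rfl
        · exact (eq_inv_of_mul_eq_one_right ((mem_ker _).mp p.2)).symm
      right_inv := fun z => rfl }
  calc (∑ h : H, single (h : G) (1 : R)) * ∑ k : K, single (k : G) 1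
      = ∑ p : H × K, single (φ p : G) (1 : R) := by
        rw [Finset.sum_mul_sum, ← Finset.univ_product_univ, Finset.sum_product]
        simp only [single_mul_single, one_mul]
        rfl
    _ = ∑ x : ↥(H ⊔ K), Nat.card {p // φ p = x} • single (x : G) (1 : R) := by
        rw [← Fintype.sum_fiberwise' φ (fun x => single (x : G) (1 : R))]
        simp [Nat.card_eq_fintype_card]
    _ = _ := by
        rw [Finset.smul_sum]
        refine Finset.sum_congr rfl fun x _ => congrArg (· • _) ?_
        exact Nat.card_congr ((φ.fiberEquivKerOfSurjective hφ x).trans hker)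

end MonoidAlgebra

theorem lambda_mul_lambda (a b : ℕ) :
    Lambda a * Lambda b = Nat.gcd a b • Lambda (Nat.lcm a b) := by
  rcases eq_or_ne a 0 with rfl | ha
  · simp [Lambda]
  rcases eq_or_ne b 0 with rfl | hb
  · simp [Lambda]
  have : NeZero a := ⟨ha⟩
  have : NeZero b := ⟨hb⟩
  have : NeZero (Nat.lcm a b) := ⟨Nat.lcm_ne_zero ha hb⟩
  have : NeZero (Nat.gcd a b) := ⟨Nat.gcd_ne_zero_left ha⟩
  let (n : ℕ) [NeZero n] : Fintype (rootsOfUnity n ℂ) := Fintype.ofFinite _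
  rw [Lambda, dif_neg ha, Lambda, dif_neg hb, Lambda, dif_neg (Nat.lcm_ne_zero ha hb),
    MonoidAlgebra.sum_single_mul_sum_single_of_sup_eq (rootsOfUnity_sup_rootsOfUnity a b),
    rootsOfUnity_inf_rootsOfUnity, Complex.card_rootsOfUnity]

theorem lambda_mul_odd_sub_one_mod_two_general (a b : ℕ) (hbo : Odd b) :
    Mod2 (Lambda a * (Lambda b - 1)) (Lambda (Nat.lcm a b) - Lambda a) := by
  obtain ⟨k, hk⟩ := hbo.of_dvd_nat (Nat.gcd_dvd_right a b)
  refine ⟨k • Lambda (Nat.lcm a b), ?_⟩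
  rw [mul_sub, mul_one, lambda_mul_lambda, hk]
  simp only [nsmul_eq_mul]
  push_cast
  ring

/-- For `a` a positive even integer and `b` a positive odd integer,
`Λ_a · (Λ_b - 1) ≡ Λ_{lcm(a,b)} - Λ_a (mod 2)` in `ℤ[ℂˣ]`. -/
theorem lambda_mul_odd_sub_one_mod_two (a b : ℕ) (ha : 0 < a) (hae : Even a)
    (hb : 0 < b) (hbo : Odd b) :
    Mod2 (Lambda a * (Lambda b - 1)) (Lambda (Nat.lcm a b) - Lambda a) :=
  lambda_mul_odd_sub_one_mod_two_general a b hbo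
end
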